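/- arXiv:2311.10192 — 2 statements merged into one kernel-verified Lean document; each statement's English description precedes it below -/
import Mathlib

section
/- Let κ > 0 and let f : [0,∞) → ℝ be twice continuously differentiable with f(0) = f′(0) = 0, and suppose there exist constants A ≥ 0 and a < κ with |f(t)| ≤ A e^{a t}, |f′(t)| ≤ A e^{a t} and |f″(t)| ≤ A e^{a t} for all t ≥ 0. Then for every n ≥ 0, the n-th Laguerre coefficient of f″ satisfies ∫₀^∞ e^{−κ t} L_n(κ t) f″(t) dt = κ² Σ_{m=0}^{n} (n − m + 1) f_m, where f_m = ∫₀^∞ e^{−κ t} L_m(κ t) f(t) dt. -/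
/-!
Two integrations by parts. The weights `w_n(t) = e^{-κt} L_n(κt)` satisfy
`w_n' = -κ ∑_{m ≤ n} w_m`, because `L_n' = -∑_{m < n} L_m` (hockey-stick identity), and hence
`(∑_{m ≤ n} w_m)' = -κ ∑_{m ≤ n} (n - m + 1) w_m`. The boundary terms vanish at `0` since
`f 0 = f' 0 = 0`, and at infinity since every `w_m` is `O(e^{-bt})` for each `b < κ`, while
`f`, `f'`, `f''` are `O(e^{at})`.
-/

open Real MeasureTheory

/-- The Laguerre polynomial `L_n(t) = Σ_{k=0}^n (n choose k) (−t)^k / k!`. -/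
noncomputable def laguerre (n : ℕ) (t : ℝ) : ℝ :=
  ∑ k ∈ Finset.range (n + 1), (n.choose k : ℝ) * (-t) ^ k / (Nat.factorial k : ℝ)

open Filter Asymptotics Set Topology

theorem sum_range_laguerre (n : ℕ) (t : ℝ) :
    ∑ m ∈ Finset.range n, laguerre m t
      = ∑ k ∈ Finset.range n, (n.choose (k + 1) : ℝ) * (-t) ^ k / k.factorial := by
  unfold laguerre
  rw [Finset.sum_comm' (t' := Finset.range n) (s' := fun k => Finset.Ico k n)
    (by intro m k; simp only [Finset.mem_range, Finset.mem_Ico]; omega)]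
  refine Finset.sum_congr rfl fun k hk => ?_
  obtain ⟨r, rfl⟩ := Nat.exists_eq_add_of_lt (Finset.mem_range.mp hk)
  rw [← Finset.sum_div, ← Finset.sum_mul, ← Nat.cast_sum, Finset.Ico_add_one_right_eq_Icc,
    Nat.sum_Icc_choose]

theorem hasDerivAt_laguerre (n : ℕ) (t : ℝ) :
    HasDerivAt (laguerre n) (-∑ m ∈ Finset.range n, laguerre m t) t := by
  have h : HasDerivAt (laguerre n) (∑ k ∈ Finset.range (n + 1),
      (n.choose k : ℝ) * (k * (-t) ^ (k - 1) * -1) / k.factorial) t := by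
    unfold laguerre
    exact HasDerivAt.fun_sum fun k _ =>
      (((hasDerivAt_pow k (-t)).comp t (hasDerivAt_neg t)).const_mul _).div_const _
  convert h using 1
  rw [Finset.sum_range_succ' _ n, sum_range_laguerre, ← Finset.sum_neg_distrib]
  simp only [Nat.cast_zero, zero_mul, mul_zero, zero_div, add_zero]
  refine Finset.sum_congr rfl fun k _ => ?_
  rw [Nat.factorial_succ, Nat.add_sub_cancel]
  push_cast
  field_simp

@[fun_prop]
theorem continuous_laguerre (n : ℕ) : Continuous (laguerre n) := by
  unfold laguerre
  fun_prop

theorem isBigO_laguerre_comp_mul (n : ℕ) (κ : ℝ) {c : ℝ} (hc : 0 < c) :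
    (fun t => laguerre n (κ * t)) =O[atTop] fun t => exp (c * t) := by
  unfold laguerre
  refine IsBigO.fun_sum fun k _ => ?_
  have hmonomial : (fun t => (n.choose k : ℝ) * (-(κ * t)) ^ k / k.factorial)
      = fun t => (n.choose k * (-κ) ^ k / k.factorial) * t ^ k := by
    funext t
    ring
  rw [hmonomial]
  exact (isLittleO_pow_exp_pos_mul_atTop k hc).isBigO.const_mul_left _

noncomputable def laguerreWeight (κ : ℝ) (n : ℕ) (t : ℝ) : ℝ :=
  exp (-κ * t) * laguerre n (κ * t)

section LaguerreWeight

variable {κ : ℝ}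

@[fun_prop]
theorem continuous_laguerreWeight (n : ℕ) : Continuous (laguerreWeight κ n) := by
  unfold laguerreWeight
  fun_prop

theorem hasDerivAt_laguerreWeight (n : ℕ) (t : ℝ) :
    HasDerivAt (laguerreWeight κ n)
      (-κ * ∑ m ∈ Finset.range (n + 1), laguerreWeight κ m t) t := by
  have hexp : HasDerivAt (fun t => exp (-κ * t)) (exp (-κ * t) * -κ) t :=
    ((hasDerivAt_id t).const_mul (-κ)).exp.congr_deriv (by simp)
  have hlag : HasDerivAt (fun t => laguerre n (κ * t))
      ((-∑ m ∈ Finset.range n, laguerre m (κ * t)) * κ) t :=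
    (hasDerivAt_laguerre n (κ * t)).comp t
      ((hasDerivAt_id t).const_mul κ |>.congr_deriv (by simp))
  refine (hexp.mul hlag).congr_deriv ?_
  simp only [laguerreWeight, Finset.sum_range_succ, ← Finset.mul_sum]
  ring

theorem sum_range_succ_sum_range_succ {R : Type*} [Semiring R] (n : ℕ) (g : ℕ → R) :
    ∑ m ∈ Finset.range (n + 1), ∑ j ∈ Finset.range (m + 1), g j
      = ∑ j ∈ Finset.range (n + 1), ((n - j : ℕ) + 1 : R) * g j := by
  rw [Finset.sum_comm' (t' := Finset.range (n + 1)) (s' := fun j => Finset.Ico j (n + 1))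
    (by intro m j; simp only [Finset.mem_range, Finset.mem_Ico]; omega)]
  refine Finset.sum_congr rfl fun j hj => ?_
  rw [Finset.sum_const, Nat.card_Ico, nsmul_eq_mul,
    Nat.sub_add_comm (Nat.lt_succ_iff.mp (Finset.mem_range.mp hj))]
  push_cast
  rfl

theorem hasDerivAt_sum_laguerreWeight (n : ℕ) (t : ℝ) :
    HasDerivAt (fun t => ∑ m ∈ Finset.range (n + 1), laguerreWeight κ m t)
      (-κ * ∑ j ∈ Finset.range (n + 1), ((n - j : ℕ) + 1 : ℝ) * laguerreWeight κ j t)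
      t := by
  refine (HasDerivAt.fun_sum fun m _ => hasDerivAt_laguerreWeight m t).congr_deriv ?_
  rw [← sum_range_succ_sum_range_succ, Finset.mul_sum]

theorem isBigO_laguerreWeight (n : ℕ) {b : ℝ} (hb : b < κ) :
    laguerreWeight κ n =O[atTop] fun t => exp (-b * t) := by
  refine ((isBigO_refl (fun t => exp (-κ * t)) atTop).mul
    (isBigO_laguerre_comp_mul n κ (sub_pos.mpr hb))).congr_right fun t => ?_
  rw [← exp_add]
  ring_nf

end LaguerreWeight

theorem isBigO_exp_of_abs_le {g : ℝ → ℝ} {A a : ℝ}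
    (h : ∀ t, 0 ≤ t → |g t| ≤ A * exp (a * t)) : g =O[atTop] fun t => exp (a * t) :=
  .of_bound A <| (eventually_ge_atTop 0).mono fun t ht => by
    simpa only [norm_eq_abs, abs_exp] using h t ht

section ExpDecay

variable {u v : ℝ → ℝ} {a b : ℝ}

theorem isBigO_mul_exp (hu : u =O[atTop] fun t => exp (-b * t))
    (hv : v =O[atTop] fun t => exp (a * t)) :
    (fun t => u t * v t) =O[atTop] fun t => exp (-(b - a) * t) :=
  (hu.mul hv).congr_right fun t => by rw [← exp_add]; ring_nf

theorem integrableOn_Ioi_mul_of_isBigO (hab : a < b) (c : ℝ) (hu : Continuous u)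
    (hv : Continuous v) (huO : u =O[atTop] fun t => exp (-b * t))
    (hvO : v =O[atTop] fun t => exp (a * t)) :
    IntegrableOn (fun t => u t * v t) (Ioi c) :=
  integrable_of_isBigO_exp_neg (sub_pos.mpr hab) (hu.mul hv).continuousOn
    (isBigO_mul_exp huO hvO)

theorem tendsto_mul_of_isBigO (hab : a < b) (huO : u =O[atTop] fun t => exp (-b * t))
    (hvO : v =O[atTop] fun t => exp (a * t)) :
    Tendsto (fun t => u t * v t) atTop (𝓝 0) := by
  refine (isBigO_mul_exp huO hvO).trans_tendsto ?_
  have hlin : Tendsto (fun t => (b - a) * t) atTop atTop :=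
    tendsto_id.const_mul_atTop (sub_pos.mpr hab)
  simpa only [neg_mul, Function.comp_def] using tendsto_exp_neg_atTop_nhds_zero.comp hlin

theorem integral_Ioi_mul_deriv_eq_neg_of_isBigO {u' v' : ℝ → ℝ} {c : ℝ} (hab : a < b)
    (hu : ∀ t, HasDerivAt u (u' t) t) (hv : ∀ t, HasDerivAt v (v' t) t)
    (hu' : Continuous u') (hv' : Continuous v')
    (huO : u =O[atTop] fun t => exp (-b * t)) (hu'O : u' =O[atTop] fun t => exp (-b * t))
    (hvO : v =O[atTop] fun t => exp (a * t)) (hv'O : v' =O[atTop] fun t => exp (a * t))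
    (hvc : v c = 0) :
    ∫ t in Ioi c, u t * v' t = -∫ t in Ioi c, u' t * v t := by
  have hu_cont : Continuous u := continuous_iff_continuousAt.mpr fun t => (hu t).continuousAt
  have hv_cont : Continuous v := continuous_iff_continuousAt.mpr fun t => (hv t).continuousAt
  have hzero : Tendsto (u * v) (𝓝[>] c) (𝓝 0) := by
    simpa only [Pi.mul_apply, hvc, mul_zero] using
      ((hu_cont.mul hv_cont).tendsto c).mono_left nhdsWithin_le_nhds
  rw [integral_Ioi_mul_deriv_eq_deriv_mul (fun t _ => hu t) (fun t _ => hv t)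
    (integrableOn_Ioi_mul_of_isBigO hab c hu_cont hv' huO hv'O)
    (integrableOn_Ioi_mul_of_isBigO hab c hu' hv_cont hu'O hvO) hzero
    (tendsto_mul_of_isBigO hab huO hvO), sub_zero, zero_sub]

end ExpDecay

theorem stmt_3_general (κ : ℝ) (f : ℝ → ℝ)
    (hf : ContDiff ℝ 2 f) (hf0 : f 0 = 0) (hf'0 : deriv f 0 = 0)
    (A a : ℝ) (ha : a < κ)
    (hfb : ∀ t : ℝ, 0 ≤ t → |f t| ≤ A * Real.exp (a * t))
    (hfb' : ∀ t : ℝ, 0 ≤ t → |deriv f t| ≤ A * Real.exp (a * t))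
    (hfb'' : ∀ t : ℝ, 0 ≤ t → |deriv (deriv f) t| ≤ A * Real.exp (a * t))
    (n : ℕ) :
    ∫ t in Set.Ioi (0 : ℝ), Real.exp (-κ * t) * laguerre n (κ * t) * deriv (deriv f) t =
      κ ^ 2 * ∑ m ∈ Finset.range (n + 1), ((n - m : ℕ) + 1 : ℝ) *
        ∫ t in Set.Ioi (0 : ℝ), Real.exp (-κ * t) * laguerre m (κ * t) * f t := by
  obtain ⟨b, hab, hbκ⟩ := exists_between ha
  have hf' : ContDiff ℝ 1 (deriv f) := hf.deriv'
  have hfO := isBigO_exp_of_abs_le hfb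
  have hf'O := isBigO_exp_of_abs_le hfb'
  have hf''O := isBigO_exp_of_abs_le hfb''
  have hw := fun m => isBigO_laguerreWeight (κ := κ) m hbκ
  have hW : (fun t => ∑ m ∈ Finset.range (n + 1), laguerreWeight κ m t)
      =O[atTop] fun t => exp (-b * t) := IsBigO.fun_sum fun m _ => hw m
  have ibp₁ : ∫ t in Ioi 0, laguerreWeight κ n t * deriv (deriv f) t
      = κ * ∫ t in Ioi 0,
          (∑ m ∈ Finset.range (n + 1), laguerreWeight κ m t) * deriv f t := by
    rw [integral_Ioi_mul_deriv_eq_neg_of_isBigO hab (hasDerivAt_laguerreWeight n)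
      (fun t => (hf'.differentiable one_ne_zero t).hasDerivAt) (by fun_prop)
      (hf'.continuous_deriv le_rfl) (hw n) (hW.const_mul_left _) hf'O hf''O hf'0]
    simp only [neg_mul, integral_neg, neg_neg, mul_assoc, integral_const_mul]
  have ibp₂ : ∫ t in Ioi 0, (∑ m ∈ Finset.range (n + 1), laguerreWeight κ m t) * deriv f t
      = κ * ∑ m ∈ Finset.range (n + 1), ((n - m : ℕ) + 1 : ℝ) *
          ∫ t in Ioi 0, laguerreWeight κ m t * f t := by
    rw [integral_Ioi_mul_deriv_eq_neg_of_isBigO hab (hasDerivAt_sum_laguerreWeight n)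
      (fun t => (hf.differentiable (by norm_num) t).hasDerivAt) (by fun_prop)
      (hf.continuous_deriv (by norm_num)) hW
      ((IsBigO.fun_sum fun m _ => (hw m).const_mul_left _).const_mul_left _)
      hfO hf'O hf0]
    simp only [neg_mul, integral_neg, neg_neg, mul_assoc, integral_const_mul, Finset.sum_mul]
    rw [integral_finsetSum _ fun m _ => ((integrableOn_Ioi_mul_of_isBigO hab 0
      (continuous_laguerreWeight m) hf.continuous (hw m) hfO).const_mul _)]
    simp only [integral_const_mul]
  simp only [laguerreWeight] at ibp₁ ibp₂
  rw [ibp₁, ibp₂]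
  ring

/-- For `κ > 0` and `f` twice continuously differentiable with
`f(0) = f′(0) = 0`, and `|f|, |f′|, |f″| ≤ A e^{a t}` on `[0,∞)` for some `A ≥ 0`, `a < κ`,
the `n`-th Laguerre coefficient of `f″` equals `κ² Σ_{m=0}^n (n − m + 1) f_m`. -/
theorem stmt_3 (κ : ℝ) (hκ : 0 < κ) (f : ℝ → ℝ)
    (hf : ContDiff ℝ 2 f) (hf0 : f 0 = 0) (hf'0 : deriv f 0 = 0)
    (A a : ℝ) (hA : 0 ≤ A) (ha : a < κ)
    (hfb : ∀ t : ℝ, 0 ≤ t → |f t| ≤ A * Real.exp (a * t))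
    (hfb' : ∀ t : ℝ, 0 ≤ t → |deriv f t| ≤ A * Real.exp (a * t))
    (hfb'' : ∀ t : ℝ, 0 ≤ t → |deriv (deriv f) t| ≤ A * Real.exp (a * t))
    (n : ℕ) :
    ∫ t in Set.Ioi (0 : ℝ), Real.exp (-κ * t) * laguerre n (κ * t) * deriv (deriv f) t =
      κ ^ 2 * ∑ m ∈ Finset.range (n + 1), ((n - m : ℕ) + 1 : ℝ) *
        ∫ t in Set.Ioi (0 : ℝ), Real.exp (-κ * t) * laguerre m (κ * t) * f t :=
  stmt_3_general κ f hf hf0 hf'0 A a ha hfb hfb' hfb'' n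
end

section
/- For every n ≥ 0, the function Φ_n is twice differentiable on (0,∞) and Φ_n″(r) = K₀(γr) v̄_n(r) + (K₁(γr)/r) w̄_n(r) for all r > 0, where v̄_n(r) = 2 Σ_{k=1}^{⌊n/2⌋} k(2k−1) a_{n,2k} r^{2k−2} − γ Σ_{k=0}^{⌊(n−1)/2⌋} (2k+1) a_{n,2k+1} r^{2k} − γ w̃_n(r) and w̄_n(r) = 4 Σ_{k=1}^{⌊(n−1)/2⌋} k² a_{n,2k+1} r^{2k} − 2γ Σ_{k=1}^{⌊n/2⌋} k a_{n,2k} r^{2k} − γ r ṽ_n(r) − w̃_n(r), with ṽ_n(r) = 2 Σ_{k=1}^{⌊n/2⌋} k a_{n,2k} r^{2k−1} − γ w_n(r) and w̃_n(r) = 2 Σ_{k=1}^{⌊(n−1)/2⌋} k a_{n,2k+1} r^{2k} − γ v_n(r). -/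
/-!
Termwise differentiation of the defining series gives `I₀' = I₁` and `I₁' = I₀ - I₁/z`, and,
through `ψ(n+1) = ψ(n) + 1/(n+1)`, the Bessel relations `K₀' = -K₁` and `K₁' = -K₀ - K₁/z`.
Consequently the derivative of `K₀(γr) f(r) + K₁(γr) g(r)` has the same shape, with `(f, g)`
replaced by `(f' - γg, g' - g/r - γf)`. Starting from `(v_n, w_n)` one step of this produces
`(ṽ_n, w̃_n)` and a second one `(v̄_n, w̄_n/r)`.
-/

open Real Filter

/-- `I₀(z) = Σ_{n=0}^∞ (z/2)^{2n}/(n!)²`. -/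
noncomputable def besselI0 (z : ℝ) : ℝ :=
  ∑' n : ℕ, (z / 2) ^ (2 * n) / (Nat.factorial n : ℝ) ^ 2

/-- `I₁(z) = Σ_{n=0}^∞ (z/2)^{2n+1}/(n!(n+1)!)`. -/
noncomputable def besselI1 (z : ℝ) : ℝ :=
  ∑' n : ℕ, (z / 2) ^ (2 * n + 1) / ((Nat.factorial n : ℝ) * (Nat.factorial (n + 1) : ℝ))

/-- `ψ(0) = 0`, `ψ(n) = Σ_{m=1}^n 1/m`. -/
noncomputable def psiHarm (n : ℕ) : ℝ := ∑ m ∈ Finset.Icc 1 n, (1 / m : ℝ)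

/-- `K₀(z) = −(ln(z/2) + C) I₀(z) + Σ_{n=1}^∞ (ψ(n)/(n!)²) (z/2)^{2n}`. -/
noncomputable def besselK0 (z : ℝ) : ℝ :=
  -(Real.log (z / 2) + Real.eulerMascheroniConstant) * besselI0 z +
    ∑' n : ℕ, psiHarm (n + 1) / (Nat.factorial (n + 1) : ℝ) ^ 2 * (z / 2) ^ (2 * (n + 1))

/-- `K₁(z) = 1/z + (ln(z/2) + C) I₁(z) − (1/2) Σ_{n=0}^∞ ((ψ(n+1)+ψ(n))/(n!(n+1)!)) (z/2)^{2n+1}`. -/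
noncomputable def besselK1 (z : ℝ) : ℝ :=
  1 / z + (Real.log (z / 2) + Real.eulerMascheroniConstant) * besselI1 z -
    (1 / 2) * ∑' n : ℕ, (psiHarm (n + 1) + psiHarm n) /
      ((Nat.factorial n : ℝ) * (Nat.factorial (n + 1) : ℝ)) * (z / 2) ^ (2 * n + 1)

/-- `β_n = κ²(n+1)/c²`. -/
noncomputable def betaC (κ c : ℝ) (n : ℕ) : ℝ := κ ^ 2 * (n + 1) / c ^ 2

/-- `γ = κ/c`. -/
noncomputable def gammaC (κ c : ℝ) : ℝ := κ / c

/-- `v_n(r) = Σ_{k=0}^{⌊n/2⌋} a_{n,2k} r^{2k}`. -/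
noncomputable def vPoly (a : ℕ → ℕ → ℝ) (n : ℕ) (r : ℝ) : ℝ :=
  ∑ k ∈ Finset.range (n / 2 + 1), a n (2 * k) * r ^ (2 * k)

/-- `w_n(r) = Σ_{k=0}^{⌊(n−1)/2⌋} a_{n,2k+1} r^{2k+1}` (so `w₀ = 0` since `a_{0,1} = 0`). -/
noncomputable def wPoly (a : ℕ → ℕ → ℝ) (n : ℕ) (r : ℝ) : ℝ :=
  ∑ k ∈ Finset.range ((n - 1) / 2 + 1), a n (2 * k + 1) * r ^ (2 * k + 1)

/-- `Φ_n(r) = K₀(γr) v_n(r) + K₁(γr) w_n(r)`. -/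
noncomputable def PhiFund (γ : ℝ) (a : ℕ → ℕ → ℝ) (n : ℕ) (r : ℝ) : ℝ :=
  besselK0 (γ * r) * vPoly a n r + besselK1 (γ * r) * wPoly a n r

/-- `ṽ_n(r) = 2 Σ_{k=1}^{⌊n/2⌋} k a_{n,2k} r^{2k−1} − γ w_n(r)`. -/
noncomputable def vTilde (γ : ℝ) (a : ℕ → ℕ → ℝ) (n : ℕ) (r : ℝ) : ℝ :=
  2 * ∑ k ∈ Finset.Icc 1 (n / 2), (k : ℝ) * a n (2 * k) * r ^ (2 * k - 1) - γ * wPoly a n r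

/-- `w̃_n(r) = 2 Σ_{k=1}^{⌊(n−1)/2⌋} k a_{n,2k+1} r^{2k} − γ v_n(r)`. -/
noncomputable def wTilde (γ : ℝ) (a : ℕ → ℕ → ℝ) (n : ℕ) (r : ℝ) : ℝ :=
  2 * ∑ k ∈ Finset.Icc 1 ((n - 1) / 2), (k : ℝ) * a n (2 * k + 1) * r ^ (2 * k) -
    γ * vPoly a n r

/-- `v̄_n(r) = 2 Σ_{k=1}^{⌊n/2⌋} k(2k−1) a_{n,2k} r^{2k−2}
  − γ Σ_{k=0}^{⌊(n−1)/2⌋} (2k+1) a_{n,2k+1} r^{2k} − γ w̃_n(r)`. -/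
noncomputable def vBar (γ : ℝ) (a : ℕ → ℕ → ℝ) (n : ℕ) (r : ℝ) : ℝ :=
  2 * ∑ k ∈ Finset.Icc 1 (n / 2), (k : ℝ) * (2 * k - 1 : ℝ) * a n (2 * k) * r ^ (2 * k - 2) -
    γ * ∑ k ∈ Finset.range ((n - 1) / 2 + 1), (2 * k + 1 : ℝ) * a n (2 * k + 1) * r ^ (2 * k) -
    γ * wTilde γ a n r

/-- `w̄_n(r) = 4 Σ_{k=1}^{⌊(n−1)/2⌋} k² a_{n,2k+1} r^{2k}
  − 2γ Σ_{k=1}^{⌊n/2⌋} k a_{n,2k} r^{2k} − γ r ṽ_n(r) − w̃_n(r)`. -/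
noncomputable def wBar (γ : ℝ) (a : ℕ → ℕ → ℝ) (n : ℕ) (r : ℝ) : ℝ :=
  4 * ∑ k ∈ Finset.Icc 1 ((n - 1) / 2), (k : ℝ) ^ 2 * a n (2 * k + 1) * r ^ (2 * k) -
    2 * γ * ∑ k ∈ Finset.Icc 1 (n / 2), (k : ℝ) * a n (2 * k) * r ^ (2 * k) -
    γ * r * vTilde γ a n r - wTilde γ a n r



open scoped Nat

section TermwiseDerivative

lemma summable_div_factorial_mul_succ_mul_pow {C : ℝ} (hC : 0 ≤ C) {R : ℝ} (hR : 0 ≤ R)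
    (j : ℕ) : Summable fun n : ℕ => C / n ! * (2 * n + j + 1 : ℝ) * R ^ (2 * n + j) := by
  refine Summable.of_nonneg_of_le (fun n => by positivity) (fun n => ?_)
    ((Real.summable_pow_div_factorial ((2 * R) ^ 2)).mul_left (C * (2 * R) ^ j))
  have h : (2 * n + j + 1 : ℝ) ≤ 2 ^ (2 * n + j) := by exact_mod_cast Nat.lt_two_pow_self
  calc C / n ! * (2 * n + j + 1 : ℝ) * R ^ (2 * n + j)
      ≤ C / n ! * 2 ^ (2 * n + j) * R ^ (2 * n + j) := by gcongr
    _ = C * (2 * R) ^ j * (((2 * R) ^ 2) ^ n / n !) := by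
      rw [← pow_mul, mul_pow, mul_pow, pow_add, pow_add]; ring

variable {c : ℕ → ℝ} {C : ℝ}

lemma abs_mul_deriv_pow_le (hc : ∀ n, |c n| ≤ C / n !) (j n : ℕ) {y R : ℝ} (hy : |y| ≤ R)
    (hR : 1 ≤ R) :
    |c n * (2 * n + j : ℕ) * y ^ (2 * n + j - 1)| ≤
      C / n ! * (2 * n + j + 1 : ℝ) * R ^ (2 * n + j) := by
  have hpow : |y| ^ (2 * n + j - 1) ≤ R ^ (2 * n + j) :=
    (pow_le_pow_left₀ (abs_nonneg y) hy _).trans (pow_le_pow_right₀ hR (Nat.sub_le _ _))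
  have hcn := hc n
  have hC : 0 ≤ C / n ! := (abs_nonneg _).trans hcn
  rw [abs_mul, abs_mul, abs_pow, Nat.abs_cast]
  gcongr
  push_cast
  linarith

lemma summable_mul_pow_of_abs_le (hc : ∀ n, |c n| ≤ C / n !) (j : ℕ) (z : ℝ) :
    Summable fun n => c n * z ^ (2 * n + j) := by
  have hC : 0 ≤ C := by simpa using (abs_nonneg (c 0)).trans (hc 0)
  refine Summable.of_norm_bounded (summable_div_factorial_mul_succ_mul_pow hC (abs_nonneg z) j)
    fun n => ?_
  rw [Real.norm_eq_abs, abs_mul, abs_pow]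
  calc |c n| * |z| ^ (2 * n + j) ≤ C / n ! * 1 * |z| ^ (2 * n + j) := by
        rw [mul_one]; gcongr; exact hc n
    _ ≤ C / n ! * (2 * n + j + 1 : ℝ) * |z| ^ (2 * n + j) := by gcongr; linarith

lemma summable_mul_deriv_pow_of_abs_le (hc : ∀ n, |c n| ≤ C / n !) (j : ℕ) (z : ℝ) :
    Summable fun n => c n * (2 * n + j : ℕ) * z ^ (2 * n + j - 1) := by
  have hC : 0 ≤ C := by simpa using (abs_nonneg (c 0)).trans (hc 0)
  exact Summable.of_norm_bounded
    (summable_div_factorial_mul_succ_mul_pow hC (by positivity : 0 ≤ |z| + 1) j)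
    fun n => abs_mul_deriv_pow_le hc j n (le_add_of_nonneg_right zero_le_one)
      (le_add_of_nonneg_left (abs_nonneg z))

lemma hasDerivAt_tsum_mul_pow_of_abs_le (hc : ∀ n, |c n| ≤ C / n !) (j : ℕ) (z : ℝ) :
    HasDerivAt (fun z => ∑' n, c n * z ^ (2 * n + j))
      (∑' n, c n * (2 * n + j : ℕ) * z ^ (2 * n + j - 1)) z := by
  have hC : 0 ≤ C := by simpa using (abs_nonneg (c 0)).trans (hc 0)
  have hR : 1 ≤ |z| + 1 := le_add_of_nonneg_left (abs_nonneg z)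
  have hz : z ∈ Set.Ioo (-(|z| + 1)) (|z| + 1) := abs_lt.1 (lt_add_one _)
  refine hasDerivAt_tsum_of_isPreconnected (g := fun n z => c n * z ^ (2 * n + j))
    (g' := fun n z => c n * (2 * n + j : ℕ) * z ^ (2 * n + j - 1))
    (summable_div_factorial_mul_succ_mul_pow hC (by positivity : 0 ≤ |z| + 1) j) isOpen_Ioo
    isPreconnected_Ioo (fun n y _ => ?_) (fun n y hy => ?_) hz
    (summable_mul_pow_of_abs_le hc j z) hz
  · rw [mul_assoc]
    exact (hasDerivAt_pow (2 * n + j) y).const_mul (c n)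
  · exact abs_mul_deriv_pow_le hc j n (abs_le.2 ⟨hy.1.le, hy.2.le⟩) hR

end TermwiseDerivative

lemma psiHarm_nonneg (n : ℕ) : 0 ≤ psiHarm n := by
  unfold psiHarm
  positivity

lemma psiHarm_le (n : ℕ) : psiHarm n ≤ n := by
  unfold psiHarm
  calc ∑ m ∈ Finset.Icc 1 n, (1 / m : ℝ) ≤ ∑ m ∈ Finset.Icc 1 n, 1 :=
        Finset.sum_le_sum fun m hm =>
          div_le_one_of_le₀ (by exact_mod_cast (Finset.mem_Icc.1 hm).1) (Nat.cast_nonneg m)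
    _ = n := by simp

lemma psiHarm_succ (n : ℕ) : psiHarm (n + 1) = psiHarm n + 1 / (n + 1) := by
  rw [psiHarm, Finset.sum_Icc_succ_top (by omega : 1 ≤ n + 1), psiHarm]
  push_cast
  ring

section BesselSeries

noncomputable def besselI0Coeff (n : ℕ) : ℝ := (1 / 2) ^ (2 * n) / (n ! : ℝ) ^ 2

noncomputable def besselI1Coeff (n : ℕ) : ℝ := (1 / 2) ^ (2 * n + 1) / (n ! * (n + 1)! : ℝ)

noncomputable def besselK0SeriesCoeff (n : ℕ) : ℝ :=
  psiHarm (n + 1) * (1 / 2) ^ (2 * n + 2) / ((n + 1)! : ℝ) ^ 2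

noncomputable def besselK1SeriesCoeff (n : ℕ) : ℝ :=
  (psiHarm (n + 1) + psiHarm n) * (1 / 2) ^ (2 * n + 1) / (n ! * (n + 1)! : ℝ)

noncomputable def besselK0Series (z : ℝ) : ℝ := ∑' n, besselK0SeriesCoeff n * z ^ (2 * n + 2)

noncomputable def besselK1Series (z : ℝ) : ℝ := ∑' n, besselK1SeriesCoeff n * z ^ (2 * n + 1)

-- The `+ 0` makes this literally the `j = 0` case of `hasDerivAt_tsum_mul_pow_of_abs_le`.
lemma besselI0_eq_tsum : besselI0 = fun z => ∑' n, besselI0Coeff n * z ^ (2 * n + 0) :=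
  funext fun z => tsum_congr fun n => by rw [besselI0Coeff, div_pow, one_div_pow]; ring

lemma besselI1_eq_tsum : besselI1 = fun z => ∑' n, besselI1Coeff n * z ^ (2 * n + 1) :=
  funext fun z => tsum_congr fun n => by rw [besselI1Coeff, div_pow, one_div_pow]; ring

lemma besselK0_eq : besselK0 = fun z =>
    -(log (z / 2) + eulerMascheroniConstant) * besselI0 z + besselK0Series z := by
  refine funext fun z => congrArg _ (tsum_congr ?_)
  exact fun n => by rw [besselK0SeriesCoeff, div_pow, one_div_pow]; ring

lemma besselK1_eq : besselK1 = fun z =>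
    1 / z + (log (z / 2) + eulerMascheroniConstant) * besselI1 z - 1 / 2 * besselK1Series z := by
  refine funext fun z => congrArg _ (congrArg _ (tsum_congr ?_))
  exact fun n => by rw [besselK1SeriesCoeff, div_pow, one_div_pow]; ring

lemma abs_besselI0Coeff_le (n : ℕ) : |besselI0Coeff n| ≤ 1 / n ! := by
  have hf : (1 : ℝ) ≤ n ! := by exact_mod_cast Nat.succ_le_of_lt n.factorial_pos
  rw [besselI0Coeff, abs_of_nonneg (by positivity)]
  calc (1 / 2 : ℝ) ^ (2 * n) / (n ! : ℝ) ^ 2 ≤ 1 / (n ! : ℝ) ^ 2 := by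
        gcongr; exact pow_le_one₀ (by norm_num) (by norm_num)
    _ ≤ 1 / (n ! : ℝ) := by gcongr; nlinarith

lemma abs_besselI1Coeff_le (n : ℕ) : |besselI1Coeff n| ≤ 1 / n ! := by
  have hf : (1 : ℝ) ≤ (n + 1)! := by exact_mod_cast Nat.succ_le_of_lt (n + 1).factorial_pos
  rw [besselI1Coeff, abs_of_nonneg (by positivity)]
  calc (1 / 2 : ℝ) ^ (2 * n + 1) / (n ! * (n + 1)! : ℝ) ≤ 1 / (n ! * (n + 1)! : ℝ) := by
        gcongr; exact pow_le_one₀ (by norm_num) (by norm_num)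
    _ ≤ 1 / (n ! : ℝ) := by gcongr; exact le_mul_of_one_le_right (by positivity) hf

lemma abs_besselK0SeriesCoeff_le (n : ℕ) : |besselK0SeriesCoeff n| ≤ 1 / n ! := by
  have hf : (1 : ℝ) ≤ (n + 1)! := by exact_mod_cast Nat.succ_le_of_lt (n + 1).factorial_pos
  have hψ : psiHarm (n + 1) ≤ n + 1 := by exact_mod_cast psiHarm_le (n + 1)
  rw [besselK0SeriesCoeff, abs_of_nonneg (by have := psiHarm_nonneg (n + 1); positivity)]
  calc psiHarm (n + 1) * (1 / 2) ^ (2 * n + 2) / ((n + 1)! : ℝ) ^ 2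
      ≤ (n + 1) * 1 / ((n + 1)! : ℝ) ^ 2 := by
        gcongr; exact pow_le_one₀ (by norm_num) (by norm_num)
    _ = 1 / (n ! * (n + 1)! : ℝ) := by rw [Nat.factorial_succ]; push_cast; field_simp
    _ ≤ 1 / (n ! : ℝ) := by gcongr; exact le_mul_of_one_le_right (by positivity) hf

lemma abs_besselK1SeriesCoeff_le (n : ℕ) : |besselK1SeriesCoeff n| ≤ 2 / n ! := by
  have hψ : psiHarm (n + 1) + psiHarm n ≤ 2 * (n + 1) := by
    have := psiHarm_le (n + 1); have := psiHarm_le n; push_cast at *; linarith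
  rw [besselK1SeriesCoeff, abs_of_nonneg (by
    have := psiHarm_nonneg (n + 1); have := psiHarm_nonneg n; positivity)]
  calc (psiHarm (n + 1) + psiHarm n) * (1 / 2) ^ (2 * n + 1) / (n ! * (n + 1)! : ℝ)
      ≤ 2 * (n + 1) * 1 / (n ! * (n + 1)! : ℝ) := by
        gcongr; exact pow_le_one₀ (by norm_num) (by norm_num)
    _ = 2 / (n ! : ℝ) / n ! := by rw [Nat.factorial_succ]; push_cast; field_simp
    _ ≤ 2 / (n ! : ℝ) :=
      div_le_self (by positivity) (by exact_mod_cast Nat.succ_le_of_lt n.factorial_pos)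

lemma besselI0Coeff_succ_mul (n : ℕ) :
    besselI0Coeff (n + 1) * (2 * n + 2) = besselI1Coeff n := by
  simp only [besselI0Coeff, besselI1Coeff, Nat.factorial_succ]
  push_cast
  field_simp
  ring

lemma besselI1Coeff_mul (n : ℕ) : besselI1Coeff n * (2 * n + 2) = besselI0Coeff n := by
  simp only [besselI0Coeff, besselI1Coeff, Nat.factorial_succ]
  push_cast
  field_simp
  ring

lemma besselK0SeriesCoeff_mul (n : ℕ) :
    besselK0SeriesCoeff n * (2 * n + 2) = besselI0Coeff (n + 1) + besselK1SeriesCoeff n / 2 := by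
  simp only [besselK0SeriesCoeff, besselK1SeriesCoeff, besselI0Coeff, Nat.factorial_succ,
    psiHarm_succ]
  push_cast
  field_simp
  ring

lemma besselK1SeriesCoeff_zero : besselK1SeriesCoeff 0 = besselI1Coeff 0 := by
  simp [besselK1SeriesCoeff, besselI1Coeff, psiHarm]

lemma besselK1SeriesCoeff_succ_mul (n : ℕ) :
    besselK1SeriesCoeff (n + 1) * (2 * n + 4) =
      2 * (besselI1Coeff (n + 1) + besselK0SeriesCoeff n) := by
  simp only [besselK1SeriesCoeff, besselK0SeriesCoeff, besselI1Coeff, Nat.factorial_succ,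
    psiHarm_succ (n + 1)]
  push_cast
  field_simp
  ring

end BesselSeries

section BesselDerivatives

lemma hasDerivAt_besselI0 (z : ℝ) : HasDerivAt besselI0 (besselI1 z) z := by
  have hD := summable_mul_deriv_pow_of_abs_le abs_besselI0Coeff_le 0 z
  rw [besselI0_eq_tsum]
  refine (hasDerivAt_tsum_mul_pow_of_abs_le abs_besselI0Coeff_le 0 z).congr_deriv ?_
  rw [hD.tsum_eq_zero_add, besselI1_eq_tsum]
  simp only [mul_zero, add_zero, Nat.cast_zero, zero_mul, zero_add]
  refine tsum_congr fun n => ?_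
  rw [← besselI0Coeff_succ_mul, show 2 * (n + 1) - 1 = 2 * n + 1 by omega]
  push_cast
  ring

lemma hasDerivAt_besselI1 {z : ℝ} (hz : z ≠ 0) :
    HasDerivAt besselI1 (besselI0 z - besselI1 z / z) z := by
  rw [besselI0_eq_tsum, besselI1_eq_tsum]
  refine (hasDerivAt_tsum_mul_pow_of_abs_le abs_besselI1Coeff_le 1 z).congr_deriv ?_
  rw [← tsum_div_const, ← (summable_mul_pow_of_abs_le abs_besselI0Coeff_le 0 z).tsum_sub
    ((summable_mul_pow_of_abs_le abs_besselI1Coeff_le 1 z).div_const z)]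
  refine tsum_congr fun n => ?_
  rw [← besselI1Coeff_mul, show 2 * n + 1 - 1 = 2 * n by omega]
  field_simp
  push_cast
  ring

lemma hasDerivAt_besselK0Series {z : ℝ} (hz : z ≠ 0) :
    HasDerivAt besselK0Series ((besselI0 z - 1) / z + besselK1Series z / 2) z := by
  refine (hasDerivAt_tsum_mul_pow_of_abs_le abs_besselK0SeriesCoeff_le 2 z).congr_deriv ?_
  have hI0 :
      HasSum (fun n => besselI0Coeff (n + 1) * z ^ (2 * (n + 1) + 0)) (besselI0 z - 1) := by
    have h :=
      (hasSum_nat_add_iff' 1).2 (summable_mul_pow_of_abs_le abs_besselI0Coeff_le 0 z).hasSum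
    rw [besselI0_eq_tsum]
    simpa [besselI0Coeff] using h
  rw [besselK1Series, ← ((hI0.div_const z).add
    ((summable_mul_pow_of_abs_le abs_besselK1SeriesCoeff_le 1 z).hasSum.div_const 2)).tsum_eq]
  refine tsum_congr fun n => ?_
  rw [show 2 * n + 2 - 1 = 2 * n + 1 by omega]
  push_cast
  rw [besselK0SeriesCoeff_mul]
  field_simp
  ring

lemma hasDerivAt_besselK1Series {z : ℝ} (hz : z ≠ 0) :
    HasDerivAt besselK1Series
      (2 * (besselI1 z / z + besselK0Series z) - besselK1Series z / z) z := by
  refine (hasDerivAt_tsum_mul_pow_of_abs_le abs_besselK1SeriesCoeff_le 1 z).congr_deriv ?_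
  set D := ∑' n, besselK1SeriesCoeff n * (2 * n + 1 : ℕ) * z ^ (2 * n + 1 - 1)
  let f n := (besselK1SeriesCoeff n * (2 * n + 2) - 2 * besselI1Coeff n) * z ^ (2 * n + 1)
  have hf : HasSum f (z * D + besselK1Series z - 2 * besselI1 z) := by
    rw [besselI1_eq_tsum]
    have hD := (summable_mul_deriv_pow_of_abs_le abs_besselK1SeriesCoeff_le 1 z).hasSum
    have hS1 := (summable_mul_pow_of_abs_le abs_besselK1SeriesCoeff_le 1 z).hasSum
    have hI1 := (summable_mul_pow_of_abs_le abs_besselI1Coeff_le 1 z).hasSum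
    refine ((hD.mul_left z).add hS1).sub (hI1.mul_left 2) |>.congr_fun fun n => ?_
    rw [show 2 * n + 1 - 1 = 2 * n by omega, pow_succ]
    push_cast
    ring
  have hf' : HasSum f (2 * z * besselK0Series z) := by
    have h0 : f 0 = 0 := by simp only [f, besselK1SeriesCoeff_zero]; ring
    refine (hasSum_nat_add_iff' 1).1 ?_
    rw [Finset.sum_range_one, h0, sub_zero]
    have hS0 := (summable_mul_pow_of_abs_le abs_besselK0SeriesCoeff_le 2 z).hasSum
    refine (hS0.mul_left (2 * z)).congr_fun fun n => ?_
    simp only [f]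
    push_cast
    rw [show 2 * ((n : ℝ) + 1) + 2 = 2 * n + 4 by ring, besselK1SeriesCoeff_succ_mul]
    ring
  field_simp
  linear_combination hf.unique hf'

lemma hasDerivAt_log_half_add_const {z : ℝ} (hz : z ≠ 0) (C : ℝ) :
    HasDerivAt (fun z => log (z / 2) + C) (1 / z) z := by
  have h := ((hasDerivAt_id z).div_const 2).log (div_ne_zero hz two_ne_zero)
  refine (h.add_const C).congr_deriv ?_
  simp only [id]
  field_simp

lemma hasDerivAt_besselK0 {z : ℝ} (hz : z ≠ 0) : HasDerivAt besselK0 (-besselK1 z) z := by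
  have hL := hasDerivAt_log_half_add_const hz eulerMascheroniConstant
  rw [besselK0_eq]
  refine ((hL.fun_neg.fun_mul (hasDerivAt_besselI0 z)).fun_add
    (hasDerivAt_besselK0Series hz)).congr_deriv ?_
  rw [besselK1_eq]
  beta_reduce
  field_simp
  ring

lemma hasDerivAt_besselK1 {z : ℝ} (hz : z ≠ 0) :
    HasDerivAt besselK1 (-besselK0 z - besselK1 z / z) z := by
  have hL := hasDerivAt_log_half_add_const hz eulerMascheroniConstant
  have hinv : HasDerivAt (fun z : ℝ => 1 / z) (-(1 / z ^ 2)) z := by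
    simpa only [one_div] using hasDerivAt_inv hz
  rw [besselK1_eq]
  refine ((hinv.fun_add (hL.fun_mul (hasDerivAt_besselI1 hz))).fun_sub
    ((hasDerivAt_besselK1Series hz).const_mul (1 / 2))).congr_deriv ?_
  rw [besselK0_eq]
  beta_reduce
  field_simp
  ring

end BesselDerivatives

lemma hasDerivAt_sum_mul_pow {ι : Type*} (s : Finset ι) (b : ι → ℝ) (m : ι → ℕ)
    (r : ℝ) :
    HasDerivAt (fun x => ∑ i ∈ s, b i * x ^ m i)
      (∑ i ∈ s, b i * m i * r ^ (m i - 1)) r := by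
  refine HasDerivAt.fun_sum fun i _ => ?_
  rw [mul_assoc]
  exact (hasDerivAt_pow (m i) r).const_mul (b i)

lemma sum_range_succ_eq_sum_Icc_of_eq_zero {M : Type*} [AddCommMonoid M] (m : ℕ) (f : ℕ → M)
    (h0 : f 0 = 0) : ∑ k ∈ Finset.range (m + 1), f k = ∑ k ∈ Finset.Icc 1 m, f k := by
  rw [Finset.range_eq_Ico, Finset.sum_eq_sum_Ico_succ_bot (Nat.succ_pos _), h0, zero_add,
    zero_add, Nat.succ_eq_add_one, Finset.Ico_add_one_right_eq_Icc]

lemma mul_sum_Icc_pow_two_mul_sub_one (m : ℕ) (g : ℕ → ℝ) (r : ℝ) :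
    r * ∑ k ∈ Finset.Icc 1 m, g k * r ^ (2 * k - 1) =
      ∑ k ∈ Finset.Icc 1 m, g k * r ^ (2 * k) := by
  rw [Finset.mul_sum]
  refine Finset.sum_congr rfl fun k hk => ?_
  have hk : 1 ≤ 2 * k := by have := (Finset.mem_Icc.1 hk).1; omega
  rw [mul_left_comm, ← pow_succ', Nat.sub_add_cancel hk]

section Polynomials

variable (a : ℕ → ℕ → ℝ) (n : ℕ)

noncomputable def vTildeSum (r : ℝ) : ℝ :=
  ∑ k ∈ Finset.Icc 1 (n / 2), (k : ℝ) * a n (2 * k) * r ^ (2 * k - 1)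

noncomputable def wTildeSum (r : ℝ) : ℝ :=
  ∑ k ∈ Finset.Icc 1 ((n - 1) / 2), (k : ℝ) * a n (2 * k + 1) * r ^ (2 * k)

lemma vTilde_eq (γ r : ℝ) : vTilde γ a n r = 2 * vTildeSum a n r - γ * wPoly a n r := rfl

lemma wTilde_eq (γ r : ℝ) : wTilde γ a n r = 2 * wTildeSum a n r - γ * vPoly a n r := rfl

lemma hasDerivAt_vPoly (r : ℝ) : HasDerivAt (vPoly a n) (2 * vTildeSum a n r) r := by
  refine (hasDerivAt_sum_mul_pow _ _ (fun k => 2 * k) r).congr_deriv ?_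
  rw [sum_range_succ_eq_sum_Icc_of_eq_zero _ _ (by simp), vTildeSum, Finset.mul_sum]
  refine Finset.sum_congr rfl fun k _ => ?_
  push_cast
  ring

lemma hasDerivAt_wPoly (r : ℝ) :
    HasDerivAt (wPoly a n)
      (∑ k ∈ Finset.range ((n - 1) / 2 + 1), (2 * k + 1 : ℝ) * a n (2 * k + 1) * r ^ (2 * k))
      r := by
  refine (hasDerivAt_sum_mul_pow _ _ (fun k => 2 * k + 1) r).congr_deriv ?_
  refine Finset.sum_congr rfl fun k _ => ?_
  rw [Nat.add_sub_cancel]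
  push_cast
  ring

lemma sum_odd_mul_pow_eq (r : ℝ) (hr : r ≠ 0) :
    ∑ k ∈ Finset.range ((n - 1) / 2 + 1), (2 * k + 1 : ℝ) * a n (2 * k + 1) * r ^ (2 * k) =
      2 * wTildeSum a n r + wPoly a n r / r := by
  rw [wTildeSum, ← sum_range_succ_eq_sum_Icc_of_eq_zero _ _ (by simp), wPoly, Finset.mul_sum,
    Finset.sum_div, ← Finset.sum_add_distrib]
  refine Finset.sum_congr rfl fun k _ => ?_
  field_simp
  ring

lemma hasDerivAt_vTildeSum (r : ℝ) :
    HasDerivAt (vTildeSum a n)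
      (∑ k ∈ Finset.Icc 1 (n / 2), (k : ℝ) * (2 * k - 1 : ℝ) * a n (2 * k) * r ^ (2 * k - 2))
      r := by
  refine (hasDerivAt_sum_mul_pow _ _ (fun k => 2 * k - 1) r).congr_deriv ?_
  refine Finset.sum_congr rfl fun k hk => ?_
  have hk := (Finset.mem_Icc.1 hk).1
  rw [Nat.cast_sub (by omega), show 2 * k - 1 - 1 = 2 * k - 2 by omega]
  push_cast
  ring

lemma hasDerivAt_wTildeSum (r : ℝ) :
    HasDerivAt (wTildeSum a n)
      (2 * ∑ k ∈ Finset.Icc 1 ((n - 1) / 2), (k : ℝ) ^ 2 * a n (2 * k + 1) * r ^ (2 * k - 1))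
      r := by
  refine (hasDerivAt_sum_mul_pow _ _ (fun k => 2 * k) r).congr_deriv ?_
  rw [Finset.mul_sum]
  refine Finset.sum_congr rfl fun k _ => ?_
  push_cast
  ring

end Polynomials

section Phi

variable {γ r : ℝ}

lemma hasDerivAt_besselK0_mul_add_besselK1_mul (hγ : γ ≠ 0) (hr : r ≠ 0) {f g : ℝ → ℝ}
    {f' g' : ℝ} (hf : HasDerivAt f f' r) (hg : HasDerivAt g g' r) :
    HasDerivAt (fun x => besselK0 (γ * x) * f x + besselK1 (γ * x) * g x)
      (besselK0 (γ * r) * (f' - γ * g r) + besselK1 (γ * r) * (g' - g r / r - γ * f r)) r := by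
  have hγr : γ * r ≠ 0 := mul_ne_zero hγ hr
  have hlin : HasDerivAt (fun x => γ * x) γ r := by simpa using (hasDerivAt_id r).const_mul γ
  have hK0 : HasDerivAt (fun x => besselK0 (γ * x)) _ r := (hasDerivAt_besselK0 hγr).comp r hlin
  have hK1 : HasDerivAt (fun x => besselK1 (γ * x)) _ r := (hasDerivAt_besselK1 hγr).comp r hlin
  refine ((hK0.fun_mul hf).fun_add (hK1.fun_mul hg)).congr_deriv ?_
  field_simp
  ring

variable (a : ℕ → ℕ → ℝ) (n : ℕ)

lemma hasDerivAt_PhiFund (hγ : γ ≠ 0) (hr : r ≠ 0) :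
    HasDerivAt (PhiFund γ a n)
      (besselK0 (γ * r) * vTilde γ a n r + besselK1 (γ * r) * wTilde γ a n r) r := by
  refine (hasDerivAt_besselK0_mul_add_besselK1_mul hγ hr (hasDerivAt_vPoly a n r)
    (hasDerivAt_wPoly a n r)).congr_deriv ?_
  rw [sum_odd_mul_pow_eq a n r hr, vTilde_eq, wTilde_eq]
  ring

lemma hasDerivAt_besselK0_mul_vTilde_add_besselK1_mul_wTilde (hγ : γ ≠ 0) (hr : r ≠ 0) :
    HasDerivAt (fun x => besselK0 (γ * x) * vTilde γ a n x + besselK1 (γ * x) * wTilde γ a n x)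
      (besselK0 (γ * r) * vBar γ a n r + besselK1 (γ * r) / r * wBar γ a n r) r := by
  have hv : HasDerivAt (vTilde γ a n) _ r :=
    ((hasDerivAt_vTildeSum a n r).const_mul 2).fun_sub ((hasDerivAt_wPoly a n r).const_mul γ)
  have hw : HasDerivAt (wTilde γ a n) _ r :=
    ((hasDerivAt_wTildeSum a n r).const_mul 2).fun_sub ((hasDerivAt_vPoly a n r).const_mul γ)
  refine (hasDerivAt_besselK0_mul_add_besselK1_mul hγ hr hv hw).congr_deriv ?_
  have h1 :=
    mul_sum_Icc_pow_two_mul_sub_one ((n - 1) / 2) (fun k => (k : ℝ) ^ 2 * a n (2 * k + 1)) r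
  have h2 : r * vTildeSum a n r = _ :=
    mul_sum_Icc_pow_two_mul_sub_one (n / 2) (fun k => (k : ℝ) * a n (2 * k)) r
  simp only [vBar, wBar]
  rw [← h1, ← h2]
  field_simp
  ring

end Phi

theorem stmt_14_general
    (κ c : ℝ) (hκ : 0 < κ) (hc : 0 < c) (a : ℕ → ℕ → ℝ)
    (n : ℕ) :
    (∀ r : ℝ, 0 < r → DifferentiableAt ℝ (PhiFund (gammaC κ c) a n) r) ∧
      ∀ r : ℝ, 0 < r →
        HasDerivAt (deriv (PhiFund (gammaC κ c) a n))
          (besselK0 (gammaC κ c * r) * vBar (gammaC κ c) a n r +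
            besselK1 (gammaC κ c * r) / r * wBar (gammaC κ c) a n r) r := by
  have hγ : gammaC κ c ≠ 0 := (div_pos hκ hc).ne'
  refine ⟨fun r hr => (hasDerivAt_PhiFund a n hγ hr.ne').differentiableAt, fun r hr => ?_⟩
  have hderiv : deriv (PhiFund (gammaC κ c) a n) =ᶠ[nhds r] fun x =>
      besselK0 (gammaC κ c * x) * vTilde (gammaC κ c) a n x +
        besselK1 (gammaC κ c * x) * wTilde (gammaC κ c) a n x :=
    eventually_of_mem (Ioi_mem_nhds hr) fun x hx =>
      (hasDerivAt_PhiFund a n hγ (ne_of_gt hx)).deriv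
  exact HasDerivAt.congr_of_eventuallyEq
    (hasDerivAt_besselK0_mul_vTilde_add_besselK1_mul_wTilde a n hγ hr.ne') hderiv

/-- For every `n ≥ 0`, `Φ_n` is twice differentiable on `(0,∞)` and
`Φ_n″(r) = K₀(γr) v̄_n(r) + (K₁(γr)/r) w̄_n(r)` for all `r > 0`. -/
theorem stmt_14
    (κ c : ℝ) (hκ : 0 < κ) (hc : 0 < c) (a : ℕ → ℕ → ℝ)
    (ha0 : ∀ n : ℕ, a n 0 = 1)
    (hann : ∀ n : ℕ, 1 ≤ n →
      a n n = -(betaC κ c 1 * a (n - 1) (n - 1)) / (2 * gammaC κ c * n))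
    (hrec : ∀ n k : ℕ, 1 ≤ k → k ≤ n - 1 →
      a n k = (1 / (2 * gammaC κ c * k)) *
        (4 * (((k + 1) / 2 : ℕ) : ℝ) ^ 2 * a n (k + 1) -
          ∑ m ∈ Finset.Icc (k - 1) (n - 1), betaC κ c (n - m) * a m (k - 1)))
    (hzero : ∀ n k : ℕ, n < k → a n k = 0)
    (n : ℕ) :
    (∀ r : ℝ, 0 < r → DifferentiableAt ℝ (PhiFund (gammaC κ c) a n) r) ∧
      ∀ r : ℝ, 0 < r →
        HasDerivAt (deriv (PhiFund (gammaC κ c) a n))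
          (besselK0 (gammaC κ c * r) * vBar (gammaC κ c) a n r +
            besselK1 (gammaC κ c * r) / r * wBar (gammaC κ c) a n r) r :=
  stmt_14_general κ c hκ hc a n
end
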